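/- Let Ω > 0, ε > 0, let J ⊂ ℤ be a finite set, and let T satisfy 0 < T ≤ π/(Ω + ε). If φ, ψ ∈ PW_Ω satisfy φ(kT) = ψ(kT) for every k ∈ ℤ \ J, then φ = ψ. That is, any function in the Paley–Wiener space PW_Ω is uniquely characterized by its samples on the grid T·(ℤ \ J). -/

import Mathlib

/-!
Put `L = π / T > Ω`. For a spectral density `u` supported in `[-Ω, Ω]`, the sample at `k T` is,
up to the factor `2L`, the `(-k)`-th Fourier coefficient of `u` on the period interval `(-L, L]`.
If the samples vanish off the finite set `J`, the zero extension of `u` is therefore a.e. a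
trigonometric polynomial. That polynomial is real-analytic and vanishes on `(Ω, L)`, hence
everywhere, so `u = 0` a.e. and the band-limited function vanishes.
-/

open MeasureTheory Real

/-- Membership in the Paley–Wiener space `PW_Ω`: `g(t) = ∫_{−Ω}^{Ω} φ(ω) e^{iωt} dω`
for some square-integrable `φ : [−Ω,Ω] → ℂ`. -/
def IsPW (Ω : ℝ) (g : ℝ → ℝ) : Prop :=
  ∃ φ : ℝ → ℂ, MemLp φ 2 (volume.restrict (Set.Icc (-Ω) Ω)) ∧
    ∀ t : ℝ, (g t : ℂ) =
      ∫ ω in Set.Icc (-Ω) Ω, φ ω * Complex.exp (Complex.I * (ω : ℂ) * (t : ℂ))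

open Set Complex

section FourierSeries

variable {T : ℝ} [Fact (0 < T)]

theorem ae_eq_sum_fourier_of_fourierCoeff_eq_zero {f : AddCircle T → ℂ}
    (hf : MemLp f 2 AddCircle.haarAddCircle) {s : Finset ℤ}
    (hs : ∀ n ∉ s, fourierCoeff f n = 0) :
    f =ᵐ[AddCircle.haarAddCircle] fun x => ∑ n ∈ s, fourierCoeff f n • fourier n x := by
  have hcoeff : fourierCoeff (hf.toLp f) = fourierCoeff f := fourierCoeff_congr_ae hf.coeFn_toLp
  have hL2 : hf.toLp f =
      ContinuousMap.toLp 2 AddCircle.haarAddCircle ℂ (∑ n ∈ s, fourierCoeff f n • fourier n) := by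
    simp only [map_sum, map_smul]
    refine (hasSum_fourier_series_L2 (hf.toLp f)).unique ?_
    rw [hcoeff]
    exact hasSum_sum_of_ne_finset_zero fun n hn => by rw [hs n hn, zero_smul]
  filter_upwards [hf.coeFn_toLp, ContinuousMap.coeFn_toLp (p := 2) (𝕜 := ℂ)
    AddCircle.haarAddCircle (∑ n ∈ s, fourierCoeff f n • fourier n)] with x hfx hx
  rw [← hfx, hL2, hx]
  simp

end FourierSeries

theorem ae_eq_sum_fourier_of_fourierCoeffOn_eq_zero {a b : ℝ} (hab : a < b) {f : ℝ → ℂ}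
    (hf : MemLp f 2 (volume.restrict (Ioc a b))) {s : Finset ℤ}
    (hs : ∀ n ∉ s, fourierCoeffOn hab f n = 0) :
    f =ᵐ[volume.restrict (Ioc a b)]
      fun x => ∑ n ∈ s, fourierCoeffOn hab f n • fourier n (x : AddCircle (b - a)) := by
  have : Fact (0 < b - a) := ⟨sub_pos.2 hab⟩
  have hb : a + (b - a) = b := add_sub_cancel a b
  have hmk := AddCircle.measurePreserving_mk (b - a) a
  rw [hb] at hmk
  have hlift : MemLp (AddCircle.liftIoc (b - a) a f) 2 AddCircle.haarAddCircle :=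
    (hb.symm ▸ hf : MemLp f 2 (volume.restrict (Ioc a (a + (b - a))))).memLp_liftIoc.haarAddCircle
  -- `fourierCoeffOn hab f` is by definition `fourierCoeff (AddCircle.liftIoc (b - a) a f)`.
  have hcirc := ae_eq_sum_fourier_of_fourierCoeff_eq_zero hlift hs
  have hvol := Measure.ae_smul_measure hcirc (ENNReal.ofReal (b - a))
  rw [← AddCircle.volume_eq_smul_haarAddCircle] at hvol
  filter_upwards [hmk.quasiMeasurePreserving.ae_eq_comp hvol, ae_restrict_mem measurableSet_Ioc]
    with x hx hxI
  rwa [Function.comp_apply, AddCircle.liftIoc_coe_apply (hb.symm ▸ hxI)] at hx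

theorem analyticOnNhd_fourier_coe (T : ℝ) (n : ℤ) :
    AnalyticOnNhd ℝ (fun x : ℝ => fourier n (x : AddCircle T)) univ := by
  intro x _
  simp_rw [fourier_coe_apply]
  exact analyticAt_cexp.restrictScalars.comp
    ((analyticAt_const.mul (ofRealCLM.analyticAt x)).div_const)

theorem AnalyticOnNhd.eq_zero_of_ae_eq_zero_on_open {E : Type*} [NormedAddCommGroup E]
    [NormedSpace ℝ E] {f : ℝ → E} (hf : AnalyticOnNhd ℝ f univ) {U : Set ℝ} (hU : IsOpen U)
    (hne : U.Nonempty) (h : f =ᵐ[volume.restrict U] 0) : f = 0 := by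
  obtain ⟨x₀, hx₀⟩ := hne
  have hU0 : EqOn f 0 U :=
    Measure.eqOn_open_of_ae_eq h hU (hf.continuousOn.mono (subset_univ U)) continuousOn_const
  funext x
  exact hf.eqOn_zero_of_preconnected_of_eventuallyEq_zero isPreconnected_univ (mem_univ x₀)
    (Filter.eventuallyEq_of_mem (hU.mem_nhds hx₀) hU0) (mem_univ x)

theorem fourier_coe_eq_cexp (L : ℝ) (n : ℤ) (x : ℝ) :
    fourier n (x : AddCircle (L - -L)) = cexp (I * x * ((n * (π / L) : ℝ) : ℂ)) := by
  rw [fourier_coe_apply]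
  congr 1
  push_cast
  field_simp
  ring

theorem fourierCoeffOn_indicator_Icc {Ω L : ℝ} (hL : -L < L) (hΩL : Ω < L) (u : ℝ → ℂ) (n : ℤ) :
    fourierCoeffOn hL ((Icc (-Ω) Ω).indicator u) n =
      (2 * L)⁻¹ • ∫ ω in Icc (-Ω) Ω, u ω * cexp (I * ω * (((-n : ℤ) * (π / L) : ℝ) : ℂ)) := by
  have hsub : Icc (-Ω) Ω ⊆ Ioc (-L) L := fun x hx => ⟨by linarith [hx.1], by linarith [hx.2]⟩
  rw [fourierCoeffOn_eq_integral, intervalIntegral.integral_of_le hL.le]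
  conv_rhs => rw [← inter_eq_self_of_subset_right hsub, ← setIntegral_indicator measurableSet_Icc]
  simp_rw [indicator_mul_left, fourier_coe_eq_cexp, smul_eq_mul, mul_comm (cexp _)]
  congr 1
  ring

theorem ae_eq_zero_of_integral_mul_cexp_eq_zero {Ω T : ℝ} (hT : 0 < T) (hΩT : Ω < π / T)
    (J : Finset ℤ) {u : ℝ → ℂ} (hu : MemLp u 2 (volume.restrict (Icc (-Ω) Ω)))
    (h : ∀ k ∉ J, ∫ ω in Icc (-Ω) Ω, u ω * cexp (I * ω * ((k * T : ℝ) : ℂ)) = 0) :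
    u =ᵐ[volume.restrict (Icc (-Ω) Ω)] 0 := by
  set L := π / T
  have hL : -L < L := neg_lt_self (div_pos pi_pos hT)
  have hLT : π / L = T := div_div_cancel₀ pi_ne_zero
  have hsub : Icc (-Ω) Ω ⊆ Ioc (-L) L := fun x hx => ⟨by linarith [hx.1], by linarith [hx.2]⟩
  set v := (Icc (-Ω) Ω).indicator u
  have hv : MemLp v 2 (volume.restrict (Ioc (-L) L)) := by
    rwa [memLp_indicator_iff_restrict measurableSet_Icc,
      Measure.restrict_restrict measurableSet_Icc, inter_eq_self_of_subset_left hsub]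
  have hcoeff : ∀ n ∉ J.image Neg.neg, fourierCoeffOn hL v n = 0 := fun n hn => by
    rw [fourierCoeffOn_indicator_Icc hL (by linarith) u n, hLT,
      h (-n) fun hJ => hn (Finset.mem_image.2 ⟨-n, hJ, neg_neg n⟩), smul_zero]
  set P := fun x : ℝ =>
    ∑ n ∈ J.image Neg.neg, fourierCoeffOn hL v n • fourier n (x : AddCircle (L - -L))
  have hvP : v =ᵐ[volume.restrict (Ioc (-L) L)] P :=
    ae_eq_sum_fourier_of_fourierCoeffOn_eq_zero hL hv hcoeff
  have hP : P = 0 := by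
    refine AnalyticOnNhd.eq_zero_of_ae_eq_zero_on_open ?_ isOpen_Ioo
      (nonempty_Ioo.2 (max_lt hΩT (by linarith) : max Ω 0 < L)) ?_
    · exact Finset.analyticOnNhd_fun_sum _ fun n _ =>
        (analyticOnNhd_fourier_coe _ n).fun_const_smul (c := fourierCoeffOn hL v n)
    · have hvanish : ∀ x ∈ Ioo (max Ω 0) L, v x = 0 := fun x hx =>
        indicator_of_notMem (fun hx' => (max_lt_iff.1 hx.1).1.not_ge hx'.2) u
      have hIoo : Ioo (max Ω 0) L ⊆ Ioc (-L) L :=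
        Ioo_subset_Ioc_self.trans (Ioc_subset_Ioc_left (le_max_of_le_right (by linarith)))
      filter_upwards [ae_restrict_of_ae_restrict_of_subset hIoo hvP,
        ae_restrict_mem measurableSet_Ioo] with x hx hxI
      exact hx.symm.trans (hvanish x hxI)
  filter_upwards [ae_restrict_of_ae_restrict_of_subset hsub hvP, ae_restrict_mem measurableSet_Icc]
    with x hx hxI
  exact (indicator_of_mem hxI u).symm.trans (hx.trans (congrFun hP x))

theorem MeasureTheory.Integrable.mul_cexp_I_mul {μ : Measure ℝ} {u : ℝ → ℂ} (hu : Integrable u μ)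
    (t : ℝ) : Integrable (fun ω : ℝ => u ω * cexp (I * ω * t)) μ := by
  refine hu.mul_bdd (c := 1) (by fun_prop) (ae_of_all _ fun ω => ?_)
  rw [mul_assoc, ← ofReal_mul, norm_exp_I_mul_ofReal]

theorem IsPW.sub {Ω : ℝ} {φ ψ : ℝ → ℝ} (hφ : IsPW Ω φ) (hψ : IsPW Ω ψ) : IsPW Ω (φ - ψ) := by
  obtain ⟨a, ha, hφa⟩ := hφ
  obtain ⟨b, hb, hψb⟩ := hψ
  refine ⟨a - b, ha.sub hb, fun t => ?_⟩
  rw [Pi.sub_apply, ofReal_sub, hφa, hψb, ← integral_sub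
    ((ha.integrable one_le_two).mul_cexp_I_mul t) ((hb.integrable one_le_two).mul_cexp_I_mul t)]
  simp_rw [Pi.sub_apply, sub_mul]

theorem IsPW.eq_zero_of_samples_eq_zero {Ω T : ℝ} {g : ℝ → ℝ} (hg : IsPW Ω g) (hT : 0 < T)
    (hΩT : Ω < π / T) (J : Finset ℤ) (h : ∀ k ∉ J, g (k * T) = 0) : g = 0 := by
  obtain ⟨u, hu, hgu⟩ := hg
  have hu0 : u =ᵐ[volume.restrict (Icc (-Ω) Ω)] 0 :=
    ae_eq_zero_of_integral_mul_cexp_eq_zero hT hΩT J hu fun k hk => by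
      rw [← hgu, h k hk, ofReal_zero]
  funext t
  have hgt := hgu t
  rwa [integral_congr_ae (hu0.mono fun ω hω => by rw [hω, Pi.zero_apply, zero_mul]),
    integral_zero, ofReal_eq_zero] at hgt

theorem stmt9_general (Ω ε T : ℝ) (hε : 0 < ε) (J : Finset ℤ)
    (hT0 : 0 < T) (hT : T ≤ π / (Ω + ε))
    (φ ψ : ℝ → ℝ) (hφ : IsPW Ω φ) (hψ : IsPW Ω ψ)
    (heq : ∀ k : ℤ, k ∉ J → φ (k * T) = ψ (k * T)) :
    φ = ψ := by
  have hΩε : 0 < Ω + ε := (div_pos_iff_of_pos_left pi_pos).1 (hT0.trans_le hT)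
  have hΩT : Ω < π / T := by
    rw [le_div_iff₀ hΩε] at hT
    rw [lt_div_iff₀ hT0]
    nlinarith
  exact sub_eq_zero.1 <| (hφ.sub hψ).eq_zero_of_samples_eq_zero hT0 hΩT J fun k hk =>
    sub_eq_zero.2 (heq k hk)

theorem stmt9 (Ω ε T : ℝ) (hΩ : 0 < Ω) (hε : 0 < ε) (J : Finset ℤ)
    (hT0 : 0 < T) (hT : T ≤ π / (Ω + ε))
    (φ ψ : ℝ → ℝ) (hφ : IsPW Ω φ) (hψ : IsPW Ω ψ)
    (heq : ∀ k : ℤ, k ∉ J → φ (k * T) = ψ (k * T)) :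
    φ = ψ :=
  stmt9_general Ω ε T hε J hT0 hT φ ψ hφ hψ heq
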